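/- (Proposition 2) Let N' be a positive even integer and L = 2N' + 2. Let a, b be unimodular complex sequences of length L whose aperiodic autocorrelation sum satisfies ρ_a(τ) + ρ_b(τ) = 0 for every τ with 1 ≤ τ ≤ 3N'/2 and for τ = 2N' + 1, and |ρ_a(τ) + ρ_b(τ)| ≤ 4 for every τ with 3N'/2 < τ ≤ 2N'. Let x, y be unimodular complex sequences of length N, and define four L×N complex arrays by X₁[i,j] = a_i·x_j, X₂[i,j] = b_i·y_j, X₃[i,j] = −a_i·conj(y_{N-1-j}), and X₄[i,j] = b_i·conj(x_{N-1-j}). Then every column sequence of each X_m (m ∈ {1,2,3,4}) has PMEPR strictly less than 4. -/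

import Mathlib

/-!
Write `A(t) = ∑ aᵢ e(it)` and `B(t) = ∑ bᵢ e(it)`. Expanding `A · conj A + B · conj B` gives
`|A(t)|² + |B(t)|² = ∑_{|τ| < L} (ρ_a(τ) + ρ_b(τ)) e(-τt)`. Since `ρ(0) = 2L` and
`ρ(-τ) = conj ρ(τ)`, the right side is at most `2L + 2 ∑_{0 < τ < L} |ρ_a(τ) + ρ_b(τ)|`, and under
the hypotheses only the `N'/2` shifts `3N'/2 < τ ≤ 2N'` contribute, each at most `4`. Hence
`|A(t)|², |B(t)|² ≤ 2L + 4N' = 4L - 4`, so `a` and `b` have PMEPR at most `4 - 4/L < 4`. Every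
column of every `X_m` is `a` or `b` times a unimodular constant, which leaves the PMEPR unchanged.
-/

open Finset

noncomputable section

/-- 1D aperiodic autocorrelation of a length-`N` complex sequence at integer shift `τ`:
`ρ_x(τ) = Σ x_j * conj (x_{j+τ})`, summed over all `j` with `j` and `j + τ` in `[0, N)`. -/
def acorr (N : ℕ) (x : ℕ → ℂ) (τ : ℤ) : ℂ :=
  ∑ j ∈ Finset.range N,
    if 0 ≤ (j : ℤ) + τ ∧ (j : ℤ) + τ < (N : ℤ) then
      x j * star (x ((j : ℤ) + τ).toNat)
    else 0

/-- 2D aperiodic autocorrelation of an `N₁ × N₂` complex array at integer shifts `(τ₁, τ₂)`. -/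
def acorr2 (N₁ N₂ : ℕ) (X : ℕ → ℕ → ℂ) (τ₁ τ₂ : ℤ) : ℂ :=
  ∑ i ∈ Finset.range N₁, ∑ j ∈ Finset.range N₂,
    if (0 ≤ (i : ℤ) + τ₁ ∧ (i : ℤ) + τ₁ < (N₁ : ℤ)) ∧
       (0 ≤ (j : ℤ) + τ₂ ∧ (j : ℤ) + τ₂ < (N₂ : ℤ)) then
      X i j * star (X ((i : ℤ) + τ₁).toNat ((j : ℤ) + τ₂).toNat)
    else 0

/-- Peak-to-mean envelope power ratio of a length-`L` complex sequence:
`sup_{t ∈ [0,1]} (1/L) * |Σ_{i<L} c_i exp(2π√-1 i t)|²`. -/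
def pmepr (L : ℕ) (c : ℕ → ℂ) : ℝ :=
  ⨆ t : Set.Icc (0 : ℝ) 1,
    (Norm.norm (∑ i ∈ Finset.range L,
      c i * Complex.exp (2 * Real.pi * Complex.I * (i : ℂ) * ((t : ℝ) : ℂ)))) ^ 2 / L

open Complex ComplexConjugate

section Autocorrelation

variable (N : ℕ) (x : ℕ → ℂ)

theorem acorr_eq_sum_filter (τ : ℤ) :
    acorr N x τ = ∑ p ∈ (range N ×ˢ range N).filter (fun p => (p.2 : ℤ) - p.1 = τ),
      x p.1 * star (x p.2) := by
  rw [acorr, sum_filter, sum_product]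
  refine sum_congr rfl fun j hj => ?_
  rw [mem_range] at hj
  split_ifs with h
  · rw [sum_eq_single_of_mem ((j : ℤ) + τ).toNat (by rw [mem_range]; omega) fun k _ hk => ?_,
      if_pos (by omega)]
    exact if_neg (by omega)
  · exact (sum_eq_zero fun k hk => if_neg (by rw [mem_range] at hk; omega)).symm

theorem acorr_neg (τ : ℤ) : acorr N x (-τ) = star (acorr N x τ) := by
  simp only [acorr_eq_sum_filter, star_sum, star_mul', star_star]
  refine sum_equiv (Equiv.prodComm _ _) (fun p => ?_) fun p _ => mul_comm _ _
  simp only [mem_filter, mem_product, Equiv.prodComm_apply, Prod.fst_swap, Prod.snd_swap]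
  constructor <;> rintro ⟨h, h'⟩ <;> exact ⟨h.symm, by omega⟩

theorem acorr_zero_of_norm_eq_one (hx : ∀ i < N, ‖x i‖ = 1) : acorr N x 0 = N := by
  calc acorr N x 0 = ∑ _j ∈ range N, (1 : ℂ) := sum_congr rfl fun j hj => ?_
    _ = N := by simp
  rw [mem_range] at hj
  rw [if_pos (by omega), add_zero, Int.toNat_natCast, star_def, mul_conj', hx j hj]
  norm_num

end Autocorrelation

theorem sum_Ioo_neg_self {M : Type*} [AddCommMonoid M] (f : ℤ → M) {n : ℤ} (hn : 0 < n) :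
    ∑ τ ∈ Ioo (-n) n, f τ = f 0 + ∑ τ ∈ Ioo 0 n, (f τ + f (-τ)) := by
  have hsplit : Ioo (-n) n = insert 0 (Ioo 0 n) ∪ Ioo (-n) 0 := by
    ext τ
    simp only [mem_union, mem_insert, mem_Ioo]
    omega
  have hdisj : Disjoint (insert 0 (Ioo 0 n)) (Ioo (-n) 0) := by
    simp only [disjoint_left, mem_insert, mem_Ioo]
    omega
  have hneg : ∑ τ ∈ Ioo 0 n, f (-τ) = ∑ τ ∈ Ioo (-n) 0, f τ :=
    sum_nbij' (-·) (-·) (by simp only [mem_Ioo]; omega) (by simp only [mem_Ioo]; omega)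
      (by simp) (by simp) (by simp)
  rw [hsplit, sum_union hdisj, sum_insert (by simp), sum_add_distrib, hneg, add_assoc]

section Fourier

variable {T : ℝ}

theorem norm_fourier_apply (n : ℤ) (x : AddCircle T) : ‖fourier n x‖ = 1 :=
  Circle.norm_coe _

theorem sum_mul_fourier_mul_conj (L : ℕ) (c : ℕ → ℂ) (x : AddCircle T) :
    (∑ i ∈ range L, c i * fourier i x) * conj (∑ i ∈ range L, c i * fourier i x)
      = ∑ τ ∈ Ioo (-(L : ℤ)) L, acorr L c τ * fourier (-τ) x := by
  have hdiff : ∀ p ∈ range L ×ˢ range L, (p.2 : ℤ) - p.1 ∈ Ioo (-(L : ℤ)) L := by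
    intro p hp
    rw [mem_product, mem_range, mem_range] at hp
    rw [mem_Ioo]
    omega
  rw [map_sum, sum_mul_sum, ← sum_product', ← sum_fiberwise_of_maps_to hdiff]
  refine sum_congr rfl fun τ _ => ?_
  rw [acorr_eq_sum_filter, sum_mul]
  refine sum_congr rfl fun p hp => ?_
  rw [mem_filter] at hp
  rw [map_mul, ← fourier_neg, mul_mul_mul_comm, ← fourier_add, star_def,
    show (p.1 : ℤ) + -p.2 = -τ by omega]

theorem sq_norm_add_sq_norm_le_sum_acorr {L : ℕ} {a b : ℕ → ℂ}
    (ha : ∀ i < L, ‖a i‖ = 1) (hb : ∀ i < L, ‖b i‖ = 1) (x : AddCircle T) :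
    ‖∑ i ∈ range L, a i * fourier i x‖ ^ 2 + ‖∑ i ∈ range L, b i * fourier i x‖ ^ 2
      ≤ 2 * L + 2 * ∑ τ ∈ Ioo 0 (L : ℤ), ‖acorr L a τ + acorr L b τ‖ := by
  rcases L.eq_zero_or_pos with rfl | hL
  · simp
  set ρ : ℤ → ℂ := fun τ => acorr L a τ + acorr L b τ
  have hpower : ((‖∑ i ∈ range L, a i * fourier i x‖ ^ 2
      + ‖∑ i ∈ range L, b i * fourier i x‖ ^ 2 : ℝ) : ℂ)
        = ∑ τ ∈ Ioo (-(L : ℤ)) L, ρ τ * fourier (-τ) x := by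
    push_cast
    simp only [← mul_conj', sum_mul_fourier_mul_conj, ← sum_add_distrib, add_mul, ρ]
  have hρ : ∀ τ, ‖ρ (-τ)‖ = ‖ρ τ‖ := fun τ => by
    simp only [ρ, acorr_neg, ← star_add, norm_star]
  have hρ0 : ‖ρ 0‖ = 2 * L := by
    simp only [ρ, acorr_zero_of_norm_eq_one L a ha, acorr_zero_of_norm_eq_one L b hb]
    norm_cast
    ring
  calc _ = ‖∑ τ ∈ Ioo (-(L : ℤ)) L, ρ τ * fourier (-τ) x‖ := by
        rw [← hpower, norm_real, Real.norm_of_nonneg (by positivity)]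
    _ ≤ ∑ τ ∈ Ioo (-(L : ℤ)) L, ‖ρ τ‖ := by
        refine (norm_sum_le _ _).trans_eq (sum_congr rfl fun τ _ => ?_)
        rw [norm_mul, norm_fourier_apply, mul_one]
    _ = _ := by
        rw [sum_Ioo_neg_self _ (by exact_mod_cast hL), hρ0, mul_sum]
        simp only [hρ, two_mul]
        rfl

end Fourier

theorem sum_Ioo_le_of_eq_zero_of_le_four {N' : ℕ} (heven : Even N') {g : ℤ → ℝ}
    (hzero₁ : ∀ τ : ℤ, 1 ≤ τ → 2 * τ ≤ 3 * (N' : ℤ) → g τ = 0)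
    (hzero₂ : g (2 * N' + 1) = 0)
    (hbd : ∀ τ : ℤ, 3 * (N' : ℤ) < 2 * τ → τ ≤ 2 * (N' : ℤ) → g τ ≤ 4) :
    ∑ τ ∈ Ioo 0 (2 * (N' : ℤ) + 2), g τ ≤ 2 * N' := by
  obtain ⟨M, hM⟩ := heven
  have hMℤ : (N' : ℤ) = M + M := by exact_mod_cast hM
  have hle : ∀ τ ∈ Ioo 0 (2 * (N' : ℤ) + 2),
      g τ ≤ if τ ∈ Ioc (3 * (M : ℤ)) (4 * M) then 4 else 0 := by
    intro τ hτ
    rw [mem_Ioo] at hτ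
    by_cases hlow : 2 * τ ≤ 3 * (N' : ℤ)
    · rw [hzero₁ τ (by omega) hlow]
      split_ifs <;> norm_num
    by_cases hhigh : τ ≤ 2 * (N' : ℤ)
    · rw [if_pos (mem_Ioc.2 ⟨by omega, by omega⟩)]
      exact hbd τ (by omega) hhigh
    · rw [show τ = 2 * N' + 1 by omega, hzero₂, if_neg (by simp only [mem_Ioc]; omega)]
  calc _ ≤ ∑ τ ∈ Ioo 0 (2 * (N' : ℤ) + 2),
        if τ ∈ Ioc (3 * (M : ℤ)) (4 * M) then (4 : ℝ) else 0 := sum_le_sum hle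
    _ = ∑ _τ ∈ Ioc (3 * (M : ℤ)) (4 * M), (4 : ℝ) := by
        rw [sum_ite_mem, inter_eq_right.2 fun τ hτ => by simp only [mem_Ioc, mem_Ioo] at *; omega]
    _ = _ := by
        rw [sum_const, Int.card_Ioc, nsmul_eq_mul, show (4 * (M : ℤ) - 3 * M).toNat = M by omega,
          hM]
        push_cast
        ring

theorem pmepr_mul_of_norm_eq_one (L : ℕ) (c : ℕ → ℂ) {u : ℂ} (hu : ‖u‖ = 1) :
    pmepr L (fun i => c i * u) = pmepr L c := by
  simp_rw [pmepr, mul_right_comm _ u, ← sum_mul, norm_mul, hu, mul_one]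

theorem pmepr_le_of_forall_sq_norm_le {L : ℕ} {c : ℕ → ℂ} {B : ℝ}
    (h : ∀ x : AddCircle (1 : ℝ), ‖∑ i ∈ range L, c i * fourier i x‖ ^ 2 ≤ B) :
    pmepr L c ≤ B / L := by
  have : Nonempty (Set.Icc (0 : ℝ) 1) := ⟨⟨0, by simp⟩⟩
  refine ciSup_le fun t => div_le_div_of_nonneg_right ?_ L.cast_nonneg
  simpa only [fourier_coe_apply, Int.cast_natCast, ofReal_one, div_one] using h t

theorem stmt_10_general (N' N : ℕ) (heven : Even N')
    (L : ℕ) (hL : L = 2 * N' + 2)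
    (a b x y : ℕ → ℂ)
    (ha : ∀ i < L, Norm.norm (a i) = 1) (hb : ∀ i < L, Norm.norm (b i) = 1)
    (hx : ∀ j < N, Norm.norm (x j) = 1) (hy : ∀ j < N, Norm.norm (y j) = 1)
    (hzero₁ : ∀ τ : ℤ, 1 ≤ τ → 2 * τ ≤ 3 * (N' : ℤ) → acorr L a τ + acorr L b τ = 0)
    (hzero₂ : acorr L a (2 * (N' : ℤ) + 1) + acorr L b (2 * (N' : ℤ) + 1) = 0)
    (hbd : ∀ τ : ℤ, 3 * (N' : ℤ) < 2 * τ → τ ≤ 2 * (N' : ℤ) →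
      Norm.norm (acorr L a τ + acorr L b τ) ≤ 4) :
    ∀ j < N,
      pmepr L (fun i => a i * x j) < 4 ∧
      pmepr L (fun i => b i * y j) < 4 ∧
      pmepr L (fun i => -(a i * star (y (N - 1 - j)))) < 4 ∧
      pmepr L (fun i => b i * star (x (N - 1 - j))) < 4 := by
  have hsum : ∑ τ ∈ Ioo 0 (L : ℤ), ‖acorr L a τ + acorr L b τ‖ ≤ 2 * N' := by
    rw [show (L : ℤ) = 2 * N' + 2 by exact_mod_cast hL]
    exact sum_Ioo_le_of_eq_zero_of_le_four heven (fun τ h₁ h₂ => by simp [hzero₁ τ h₁ h₂])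
      (by simp [hzero₂]) hbd
  have hLr : (L : ℝ) = 2 * N' + 2 := by exact_mod_cast hL
  have hpower : ∀ x : AddCircle (1 : ℝ), ‖∑ i ∈ range L, a i * fourier i x‖ ^ 2
      + ‖∑ i ∈ range L, b i * fourier i x‖ ^ 2 ≤ 4 * L - 4 := fun x =>
    (sq_norm_add_sq_norm_le_sum_acorr ha hb x).trans (by linarith)
  have hlt : (4 * L - 4 : ℝ) / L < 4 := by
    rw [div_lt_iff₀ (by linarith)]
    linarith
  have hA : pmepr L a < 4 := (pmepr_le_of_forall_sq_norm_le fun x =>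
    (le_add_of_nonneg_right (sq_nonneg _)).trans (hpower x)).trans_lt hlt
  have hB : pmepr L b < 4 := (pmepr_le_of_forall_sq_norm_le fun x =>
    (le_add_of_nonneg_left (sq_nonneg _)).trans (hpower x)).trans_lt hlt
  intro j hj
  have hj' : N - 1 - j < N := by omega
  simp_rw [← mul_neg]
  exact ⟨(pmepr_mul_of_norm_eq_one L a (hx j hj)).trans_lt hA,
    (pmepr_mul_of_norm_eq_one L b (hy j hj)).trans_lt hB,
    (pmepr_mul_of_norm_eq_one L a (by rw [norm_neg, norm_star, hy _ hj'])).trans_lt hA,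
    (pmepr_mul_of_norm_eq_one L b (by rw [norm_star, hx _ hj'])).trans_lt hB⟩

/-- Proposition 2: with `L = 2N' + 2` for a positive even `N'`, and a
unimodular pair `(a, b)` whose autocorrelation sum vanishes for `1 ≤ τ ≤ 3N'/2` and at
`τ = 2N' + 1`, and is bounded in modulus by `4` for `3N'/2 < τ ≤ 2N'`, every column
sequence of each of the four arrays has PMEPR strictly less than `4`. -/
theorem stmt_10 (N' N : ℕ) (hpos : 0 < N') (heven : Even N')
    (L : ℕ) (hL : L = 2 * N' + 2)
    (a b x y : ℕ → ℂ)
    (ha : ∀ i < L, Norm.norm (a i) = 1) (hb : ∀ i < L, Norm.norm (b i) = 1)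
    (hx : ∀ j < N, Norm.norm (x j) = 1) (hy : ∀ j < N, Norm.norm (y j) = 1)
    (hzero₁ : ∀ τ : ℤ, 1 ≤ τ → 2 * τ ≤ 3 * (N' : ℤ) → acorr L a τ + acorr L b τ = 0)
    (hzero₂ : acorr L a (2 * (N' : ℤ) + 1) + acorr L b (2 * (N' : ℤ) + 1) = 0)
    (hbd : ∀ τ : ℤ, 3 * (N' : ℤ) < 2 * τ → τ ≤ 2 * (N' : ℤ) →
      Norm.norm (acorr L a τ + acorr L b τ) ≤ 4) :
    ∀ j < N,
      pmepr L (fun i => a i * x j) < 4 ∧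
      pmepr L (fun i => b i * y j) < 4 ∧
      pmepr L (fun i => -(a i * star (y (N - 1 - j)))) < 4 ∧
      pmepr L (fun i => b i * star (x (N - 1 - j))) < 4 :=
  stmt_10_general N' N heven L hL a b x y ha hb hx hy hzero₁ hzero₂ hbd

end
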